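/- arXiv:0709.2383 — 5 statements merged into one kernel-verified Lean document; each statement's English description precedes it below -/
import Mathlib

section
/- Let A, B ⊆ ℕ ∪ {0} be finite subsets both containing 0 and fix constants (M, D, R). If T₁ and T₂ are both rooted increasing rough isometries from A to B with constants (M, D, R), then the pointwise maximum T₁ ∨ T₂ defined by (T₁ ∨ T₂)(x) = max(T₁(x), T₂(x)) is also a rooted increasing rough isometry from A to B with constants (M, D, R). -/
/-- A rooted increasing rough isometry from `A` to `B` (subsets of ℕ, both containing 0)
with constants (M, D, R). -/
def RootedIncRI (A B : Set ℕ) (T : ℕ → ℕ) (M D R : ℝ) : Prop :=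
  T 0 = 0 ∧
  (∀ x ∈ A, T x ∈ B) ∧
  (∀ x ∈ A, ∀ y ∈ A, x ≤ y → T x ≤ T y) ∧
  (∀ x ∈ A, ∀ y ∈ A,
      (1 / M) * |(x : ℝ) - (y : ℝ)| - D ≤ |(T x : ℝ) - (T y : ℝ)| ∧
      |(T x : ℝ) - (T y : ℝ)| ≤ M * |(x : ℝ) - (y : ℝ)| + D) ∧
  (∀ b ∈ B, ∃ x ∈ A, |(T x : ℝ) - (b : ℝ)| ≤ R)

/-- the pointwise maximum of two rooted increasing rough isometries between
finite subsets of ℕ containing 0 is again one, with the same constants. -/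
theorem max_of_rootedIncRI (A B : Set ℕ) (hA : A.Finite) (hB : B.Finite)
    (h0A : 0 ∈ A) (h0B : 0 ∈ B) (M D R : ℝ) (T₁ T₂ : ℕ → ℕ)
    (h₁ : RootedIncRI A B T₁ M D R) (h₂ : RootedIncRI A B T₂ M D R) :
    RootedIncRI A B (fun x => max (T₁ x) (T₂ x)) M D R := by
  obtain ⟨h01, hmap1, hmon1, hdist1, hsurj1⟩ := h₁
  obtain ⟨h02, hmap2, hmon2, hdist2, hsurj2⟩ := h₂
  refine ⟨by simp [h01, h02], ?_, ?_, ?_, ?_⟩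
  · intro x hx
    rcases le_total (T₁ x) (T₂ x) with h | h
    · simpa [max_eq_right h] using hmap2 x hx
    · simpa [max_eq_left h] using hmap1 x hx
  · intro x hx y hy hxy
    exact max_le_max (hmon1 x hx y hy hxy) (hmon2 x hx y hy hxy)
  · -- distances
    have key : ∀ x ∈ A, ∀ y ∈ A, x ≤ y →
        (1 / M) * |(x : ℝ) - (y : ℝ)| - D ≤
          |((max (T₁ x) (T₂ x) : ℕ) : ℝ) - ((max (T₁ y) (T₂ y) : ℕ) : ℝ)| ∧
        |((max (T₁ x) (T₂ x) : ℕ) : ℝ) - ((max (T₁ y) (T₂ y) : ℕ) : ℝ)| ≤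
          M * |(x : ℝ) - (y : ℝ)| + D := by
      intro x hx y hy hxy
      have m1 := hmon1 x hx y hy hxy
      have m2 := hmon2 x hx y hy hxy
      have d1 := hdist1 x hx y hy
      have d2 := hdist2 x hx y hy
      have e1 : |(T₁ x : ℝ) - (T₁ y : ℝ)| = (T₁ y : ℝ) - (T₁ x : ℝ) := by
        rw [abs_sub_comm, abs_of_nonneg] ; exact sub_nonneg.2 (by exact_mod_cast m1)
      have e2 : |(T₂ x : ℝ) - (T₂ y : ℝ)| = (T₂ y : ℝ) - (T₂ x : ℝ) := by
        rw [abs_sub_comm, abs_of_nonneg] ; exact sub_nonneg.2 (by exact_mod_cast m2)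
      rw [e1] at d1; rw [e2] at d2
      have em : |((max (T₁ x) (T₂ x) : ℕ) : ℝ) - ((max (T₁ y) (T₂ y) : ℕ) : ℝ)| =
          ((max (T₁ y) (T₂ y) : ℕ) : ℝ) - ((max (T₁ x) (T₂ x) : ℕ) : ℝ) := by
        rw [abs_sub_comm, abs_of_nonneg]
        exact sub_nonneg.2 (by exact_mod_cast max_le_max m1 m2)
      rw [em]
      push_cast [Nat.cast_max]
      constructor
      · rcases max_cases (T₁ x : ℝ) (T₂ x : ℝ) with ⟨hc, _⟩ | ⟨hc, _⟩ <;> rw [hc]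
        · have : (T₁ y : ℝ) ≤ max (T₁ y : ℝ) (T₂ y : ℝ) := le_max_left _ _
          linarith [d1.1]
        · have : (T₂ y : ℝ) ≤ max (T₁ y : ℝ) (T₂ y : ℝ) := le_max_right _ _
          linarith [d2.1]
      · rcases max_cases (T₁ y : ℝ) (T₂ y : ℝ) with ⟨hc, _⟩ | ⟨hc, _⟩ <;> rw [hc]
        · have : (T₁ x : ℝ) ≤ max (T₁ x : ℝ) (T₂ x : ℝ) := le_max_left _ _
          linarith [d1.2]
        · have : (T₂ x : ℝ) ≤ max (T₁ x : ℝ) (T₂ x : ℝ) := le_max_right _ _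
          linarith [d2.2]
    intro x hx y hy
    rcases le_total x y with hxy | hxy
    · exact key x hx y hy hxy
    · have h := key y hy x hx hxy
      beta_reduce
      rw [abs_sub_comm ((x:ℝ)) ((y:ℝ)), abs_sub_comm (((T₁ x ⊔ T₂ x : ℕ)):ℝ) (((T₁ y ⊔ T₂ y : ℕ)):ℝ)]
      exact h
  · intro b hb
    obtain ⟨x₁, hx₁, hb1⟩ := hsurj1 b hb
    obtain ⟨x₂, hx₂, hb2⟩ := hsurj2 b hb
    rcases le_total x₁ x₂ with h | h
    · refine ⟨x₁, hx₁, ?_⟩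
      have m2 : T₂ x₁ ≤ T₂ x₂ := hmon2 x₁ hx₁ x₂ hx₂ h
      have hb1' := abs_le.1 hb1
      have hb2' := abs_le.1 hb2
      have m2' : (T₂ x₁ : ℝ) ≤ (T₂ x₂ : ℝ) := by exact_mod_cast m2
      rw [abs_le]
      push_cast [Nat.cast_max]
      constructor
      · have : (b : ℝ) - R ≤ (T₁ x₁ : ℝ) := by linarith [hb1'.1]
        have := le_trans this (le_max_left (T₁ x₁ : ℝ) (T₂ x₁ : ℝ))
        linarith
      · have h1 : (T₁ x₁ : ℝ) ≤ (b : ℝ) + R := by linarith [hb1'.2]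
        have h2 : (T₂ x₁ : ℝ) ≤ (b : ℝ) + R := by linarith [hb2'.2]
        have := max_le h1 h2
        linarith
    · refine ⟨x₂, hx₂, ?_⟩
      have m1 : T₁ x₂ ≤ T₁ x₁ := hmon1 x₂ hx₂ x₁ hx₁ h
      have hb1' := abs_le.1 hb1
      have hb2' := abs_le.1 hb2
      have m1' : (T₁ x₂ : ℝ) ≤ (T₁ x₁ : ℝ) := by exact_mod_cast m1
      rw [abs_le]
      push_cast [Nat.cast_max]
      constructor
      · have : (b : ℝ) - R ≤ (T₂ x₂ : ℝ) := by linarith [hb2'.1]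
        have := le_trans this (le_max_right (T₁ x₂ : ℝ) (T₂ x₂ : ℝ))
        linarith
      · have h1 : (T₁ x₂ : ℝ) ≤ (b : ℝ) + R := by linarith [hb1'.2]
        have h2 : (T₂ x₂ : ℝ) ≤ (b : ℝ) + R := by linarith [hb2'.2]
        have := max_le h1 h2
        linarith
end

section
/- Let A, B ⊆ ℕ ∪ {0} be finite subsets both containing 0 and fix constants (M, D, R). If T₁ and T₂ are both rooted increasing rough isometries from A to B with constants (M, D, R), then the pointwise minimum T₁ ∧ T₂ defined by (T₁ ∧ T₂)(x) = min(T₁(x), T₂(x)) is also a rooted increasing rough isometry from A to B with constants (M, D, R). -/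
/-- the pointwise minimum of two rooted increasing rough isometries between
finite subsets of ℕ containing 0 is again one, with the same constants. -/
theorem min_of_rootedIncRI (A B : Set ℕ) (hA : A.Finite) (hB : B.Finite)
    (h0A : 0 ∈ A) (h0B : 0 ∈ B) (M D R : ℝ) (T₁ T₂ : ℕ → ℕ)
    (h₁ : RootedIncRI A B T₁ M D R) (h₂ : RootedIncRI A B T₂ M D R) :
    RootedIncRI A B (fun x => min (T₁ x) (T₂ x)) M D R := by
  obtain ⟨h10, h1B, h1m, h1d, h1R⟩ := h₁
  obtain ⟨h20, h2B, h2m, h2d, h2R⟩ := h₂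
  refine ⟨by simp [h10, h20], ?_, ?_, ?_, ?_⟩
  · intro x hx
    rcases min_choice (T₁ x) (T₂ x) with h | h <;> simp only [h]
    · exact h1B x hx
    · exact h2B x hx
  · intro x hx y hy hxy
    exact min_le_min (h1m x hx y hy hxy) (h2m x hx y hy hxy)
  · -- distance bounds
    have key : ∀ x ∈ A, ∀ y ∈ A, x ≤ y →
        (1 / M) * |(x : ℝ) - (y : ℝ)| - D ≤
          |((min (T₁ x) (T₂ x) : ℕ) : ℝ) - ((min (T₁ y) (T₂ y) : ℕ) : ℝ)| ∧
        |((min (T₁ x) (T₂ x) : ℕ) : ℝ) - ((min (T₁ y) (T₂ y) : ℕ) : ℝ)| ≤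
          M * |(x : ℝ) - (y : ℝ)| + D := by
      intro x hx y hy hxy
      have m1 : T₁ x ≤ T₁ y := h1m x hx y hy hxy
      have m2 : T₂ x ≤ T₂ y := h2m x hx y hy hxy
      have d1 := h1d x hx y hy
      have d2 := h2d x hx y hy
      have habs : |(x : ℝ) - (y : ℝ)| = (y : ℝ) - x := by
        rw [abs_sub_comm]; exact abs_of_nonneg (sub_nonneg.2 (by exact_mod_cast hxy))
      have habs1 : |(T₁ x : ℝ) - (T₁ y : ℝ)| = (T₁ y : ℝ) - T₁ x := by
        rw [abs_sub_comm]; exact abs_of_nonneg (sub_nonneg.2 (by exact_mod_cast m1))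
      have habs2 : |(T₂ x : ℝ) - (T₂ y : ℝ)| = (T₂ y : ℝ) - T₂ x := by
        rw [abs_sub_comm]; exact abs_of_nonneg (sub_nonneg.2 (by exact_mod_cast m2))
      rw [habs, habs1] at d1
      rw [habs, habs2] at d2
      have hmm : min (T₁ x) (T₂ x) ≤ min (T₁ y) (T₂ y) := min_le_min m1 m2
      have habsm : |((min (T₁ x) (T₂ x) : ℕ) : ℝ) - ((min (T₁ y) (T₂ y) : ℕ) : ℝ)| =
          ((min (T₁ y) (T₂ y) : ℕ) : ℝ) - ((min (T₁ x) (T₂ x) : ℕ) : ℝ) := by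
        rw [abs_sub_comm]; exact abs_of_nonneg (sub_nonneg.2 (by exact_mod_cast hmm))
      rw [habsm, habs]
      push_cast
      constructor
      · -- lower bound: use the index achieving the min at y
        rcases le_total (T₁ y) (T₂ y) with h | h
        · have hy' : min ((T₁ y : ℝ)) ((T₂ y : ℝ)) = (T₁ y : ℝ) :=
            min_eq_left (by exact_mod_cast h)
          have hx' : min ((T₁ x : ℝ)) ((T₂ x : ℝ)) ≤ (T₁ x : ℝ) := min_le_left _ _
          linarith [d1.1]
        · have hy' : min ((T₁ y : ℝ)) ((T₂ y : ℝ)) = (T₂ y : ℝ) :=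
            min_eq_right (by exact_mod_cast h)
          have hx' : min ((T₁ x : ℝ)) ((T₂ x : ℝ)) ≤ (T₂ x : ℝ) := min_le_right _ _
          linarith [d2.1]
      · -- upper bound: use the index achieving the min at x
        rcases le_total (T₁ x) (T₂ x) with h | h
        · have hx' : min ((T₁ x : ℝ)) ((T₂ x : ℝ)) = (T₁ x : ℝ) :=
            min_eq_left (by exact_mod_cast h)
          have hy' : min ((T₁ y : ℝ)) ((T₂ y : ℝ)) ≤ (T₁ y : ℝ) := min_le_left _ _
          linarith [d1.2]
        · have hx' : min ((T₁ x : ℝ)) ((T₂ x : ℝ)) = (T₂ x : ℝ) :=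
            min_eq_right (by exact_mod_cast h)
          have hy' : min ((T₁ y : ℝ)) ((T₂ y : ℝ)) ≤ (T₂ y : ℝ) := min_le_right _ _
          linarith [d2.2]
    intro x hx y hy
    rcases le_total x y with h | h
    · exact key x hx y hy h
    · obtain ⟨k1, k2⟩ := key y hy x hx h
      rw [abs_sub_comm ((x : ℝ)) y, abs_sub_comm ((min (T₁ x) (T₂ x) : ℕ) : ℝ)]
      exact ⟨k1, k2⟩
  · -- R-density
    intro b hb
    obtain ⟨x₁, hx₁, hR1⟩ := h1R b hb
    obtain ⟨x₂, hx₂, hR2⟩ := h2R b hb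
    rw [abs_le] at hR1 hR2
    rcases le_total (T₂ x₁) (T₁ x₁) with h | h
    · rcases le_total x₂ x₁ with hle | hle
      · -- min at x₁ is T₂ x₁; T₂ x₁ ≥ T₂ x₂ ≥ b - R, and T₂ x₁ ≤ T₁ x₁ ≤ b + R
        refine ⟨x₁, hx₁, ?_⟩
        have hmin : min (T₁ x₁) (T₂ x₁) = T₂ x₁ := min_eq_right h
        have hmono : T₂ x₂ ≤ T₂ x₁ := h2m x₂ hx₂ x₁ hx₁ hle
        simp only [hmin]
        rw [abs_le]
        constructor
        · have : ((T₂ x₂ : ℝ)) ≤ (T₂ x₁ : ℝ) := by exact_mod_cast hmono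
          linarith [hR2.1]
        · have : ((T₂ x₁ : ℝ)) ≤ (T₁ x₁ : ℝ) := by exact_mod_cast h
          linarith [hR1.2]
      · -- x₁ ≤ x₂ : use x₂. min at x₂ ≥ min at x₁... need careful:
        rcases le_total (T₁ x₂) (T₂ x₂) with h' | h'
        · refine ⟨x₂, hx₂, ?_⟩
          have hmin : min (T₁ x₂) (T₂ x₂) = T₁ x₂ := min_eq_left h'
          have hmono : T₁ x₁ ≤ T₁ x₂ := h1m x₁ hx₁ x₂ hx₂ hle
          simp only [hmin]
          rw [abs_le]
          constructor
          · have : ((T₁ x₁ : ℝ)) ≤ (T₁ x₂ : ℝ) := by exact_mod_cast hmono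
            linarith [hR1.1]
          · have : ((T₁ x₂ : ℝ)) ≤ (T₂ x₂ : ℝ) := by exact_mod_cast h'
            linarith [hR2.2]
        · refine ⟨x₂, hx₂, ?_⟩
          have hmin : min (T₁ x₂) (T₂ x₂) = T₂ x₂ := min_eq_right h'
          simp only [hmin]
          rw [abs_le]
          exact hR2
    · -- min at x₁ is T₁ x₁
      refine ⟨x₁, hx₁, ?_⟩
      have hmin : min (T₁ x₁) (T₂ x₁) = T₁ x₁ := min_eq_left h
      simp only [hmin]
      rw [abs_le]
      exact hR1
end

section
/- Let A, B ⊆ ℕ ∪ {0} be infinite subsets both containing 0, and let T : A → B be a rooted rough isometry with constants (M, D, R) where M ≥ 1. There exists L = L(M, D) such that: if there exist x, y ∈ A with x < y and T(y) ≤ T(x) − L, then there exists z ∈ A with z ≥ y, z − x ≥ L/(2M), and Gap(z) ≥ (z−x)/(2M²), where Gap(z) denotes the distance from z to its successor in A. -/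
/-- A rooted rough isometry from `(A,0)` to `(B,0)` with constants (M, D, R). -/
def RootedRI (A B : Set ℕ) (T : ℕ → ℕ) (M D R : ℝ) : Prop :=
  T 0 = 0 ∧
  (∀ x ∈ A, T x ∈ B) ∧
  (∀ x ∈ A, ∀ y ∈ A,
      (1 / M) * |(x : ℝ) - (y : ℝ)| - D ≤ |(T x : ℝ) - (T y : ℝ)| ∧
      |(T x : ℝ) - (T y : ℝ)| ≤ M * |(x : ℝ) - (y : ℝ)| + D) ∧
  (∀ b ∈ B, ∃ x ∈ A, |(T x : ℝ) - (b : ℝ)| ≤ R)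

/-- `Gap(z)`: the distance from `z` to the smallest element of `A` strictly above `z`. -/
noncomputable def gapOf (A : Set ℕ) (z : ℕ) : ℝ :=
  ((sInf {m | m ∈ A ∧ z < m} : ℕ) : ℝ) - (z : ℝ)

set_option maxHeartbeats 1000000 in
/-- the big-gap deterministic lemma. There is `L = L(M,D)` such that if a
rooted rough isometry goes down by `L` between `x < y`, then some `z ≥ y` with
`z - x ≥ L/(2M)` has a gap of size at least `(z-x)/(2M²)`. -/
theorem big_gap_deterministic :
    ∀ M D : ℝ, 1 ≤ M → 0 ≤ D →
    ∃ L : ℝ, 0 < L ∧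
      ∀ (A B : Set ℕ) (T : ℕ → ℕ) (R : ℝ),
        A.Infinite → B.Infinite → 0 ∈ A → 0 ∈ B →
        RootedRI A B T M D R →
        ∀ x ∈ A, ∀ y ∈ A, x < y → (T y : ℝ) ≤ (T x : ℝ) - L →
        ∃ z ∈ A, y ≤ z ∧ L / (2 * M) ≤ (z : ℝ) - (x : ℝ) ∧
          ((z : ℝ) - (x : ℝ)) / (2 * M ^ 2) ≤ gapOf A z := by
  intro M D hM hD
  have hMpos : (0:ℝ) < M := by linarith
  refine ⟨4*D*M^2 + 2*D + 1, by nlinarith, ?_⟩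
  set L : ℝ := 4*D*M^2 + 2*D + 1 with hLdef
  intro A B T R hAinf hBinf hA0 hB0 hRI x hxA y hyA hxy hTL
  obtain ⟨hT0, hmap, hpair, hsurj⟩ := hRI
  have hLD : (2:ℝ)*D ≤ L := by nlinarith
  -- the set of candidates
  set S : Set ℕ := {w | w ∈ A ∧ y ≤ w ∧ (T w : ℝ) ≤ (T x : ℝ)} with hSdef
  have hDM2 : (0:ℝ) ≤ D * M^2 := by positivity
  have hLpos : (0:ℝ) < L := by simp only [hLdef]; nlinarith
  have hyS : y ∈ S := ⟨hyA, le_refl y, by linarith⟩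
  have hbdd : BddAbove S := by
    obtain ⟨N, hN⟩ := exists_nat_ge (M * ((T x : ℝ) + D))
    refine ⟨N, fun w hw => ?_⟩
    obtain ⟨hwA, hwy, hwT⟩ := hw
    have h1 := (hpair w hwA 0 hA0).1
    rw [hT0] at h1
    rw [Nat.cast_zero, sub_zero, sub_zero,
      abs_of_nonneg (by positivity : (0:ℝ) ≤ (w:ℝ)),
      abs_of_nonneg (by positivity : (0:ℝ) ≤ (T w:ℝ))] at h1
    have : (w : ℝ) ≤ N := by
      have h2 : (1/M) * (w:ℝ) ≤ (T x : ℝ) + D := by linarith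
      have h3 := mul_le_mul_of_nonneg_left h2 hMpos.le
      rw [← mul_assoc] at h3
      rw [mul_one_div, div_self hMpos.ne', one_mul] at h3
      linarith
    exact_mod_cast this
  set z := sSup S with hzdef
  have hzS : z ∈ S := Nat.sSup_mem ⟨y, hyS⟩ hbdd
  obtain ⟨hzA, hzy, hzT⟩ := hzS
  -- the successor z'
  have hne : {m | m ∈ A ∧ z < m}.Nonempty := by
    obtain ⟨b, hbA, hbz⟩ := hAinf.exists_gt z
    exact ⟨b, hbA, hbz⟩
  set z' := sInf {m | m ∈ A ∧ z < m} with hz'def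
  have hz'mem : z' ∈ {m | m ∈ A ∧ z < m} := Nat.sInf_mem hne
  obtain ⟨hz'A, hzz'⟩ := hz'mem
  have hz'notS : z' ∉ S := fun h => absurd (le_csSup hbdd h) (not_le.mpr hzz')
  have hTz' : (T x : ℝ) < (T z' : ℝ) := by
    by_contra h
    exact hz'notS ⟨hz'A, le_trans hzy hzz'.le, not_lt.mp h⟩
  -- casts
  have hxz : (x:ℝ) < (z:ℝ) := by exact_mod_cast lt_of_lt_of_le hxy hzy
  have hzz'R : (z:ℝ) < (z':ℝ) := by exact_mod_cast hzz'
  have hxyR : (x:ℝ) < (y:ℝ) := by exact_mod_cast hxy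
  have hyzR : (y:ℝ) ≤ (z:ℝ) := by exact_mod_cast hzy
  -- key estimates
  have ha : (z:ℝ)/M - (x:ℝ)/M - D ≤ (T x : ℝ) - (T z : ℝ) := by
    have h1 := (hpair z hzA x hxA).1
    rw [abs_of_nonneg (by linarith : (0:ℝ) ≤ (z:ℝ) - (x:ℝ)),
      abs_of_nonpos (by linarith : (T z:ℝ) - (T x:ℝ) ≤ 0)] at h1
    have : (1/M) * ((z:ℝ) - (x:ℝ)) = (z:ℝ)/M - (x:ℝ)/M := by ring
    linarith [h1, this ▸ h1]
  have hb : (T z' : ℝ) - (T z : ℝ) ≤ M * ((z':ℝ) - (z:ℝ)) + D := by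
    have h1 := (hpair z' hz'A z hzA).2
    rw [abs_of_nonneg (by linarith : (0:ℝ) ≤ (z':ℝ) - (z:ℝ))] at h1
    calc (T z' : ℝ) - (T z : ℝ) ≤ |(T z' : ℝ) - (T z : ℝ)| := le_abs_self _
      _ ≤ M * ((z':ℝ) - (z:ℝ)) + D := h1
  have hd : L ≤ M * ((y:ℝ) - (x:ℝ)) + D := by
    have h1 := (hpair x hxA y hyA).2
    rw [abs_of_nonpos (by linarith : (x:ℝ) - (y:ℝ) ≤ 0)] at h1
    have h2 : (T x : ℝ) - (T y : ℝ) ≤ |(T x : ℝ) - (T y : ℝ)| := le_abs_self _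
    have : M * (-((x:ℝ) - (y:ℝ))) = M * ((y:ℝ) - (x:ℝ)) := by ring
    linarith [this ▸ h1]
  -- z - x is large
  have hzx : L / (2*M) ≤ (z:ℝ) - (x:ℝ) := by
    rw [div_le_iff₀ (by positivity)]
    have h0 : M * ((y:ℝ)-(x:ℝ)) ≤ M * ((z:ℝ)-(x:ℝ)) :=
      mul_le_mul_of_nonneg_left (by linarith) hMpos.le
    have e : M * ((z:ℝ)-(x:ℝ)) * 2 = ((z:ℝ)-(x:ℝ)) * (2*M) := by ring
    linarith [hLdef, h0, hd, hD, hDM2]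
  have hzx4 : 4*D*M ≤ (z:ℝ) - (x:ℝ) := by
    have h0 : M * ((y:ℝ)-(x:ℝ)) ≤ M * ((z:ℝ)-(x:ℝ)) :=
      mul_le_mul_of_nonneg_left (by linarith) hMpos.le
    have h1 : M * (4*D*M) ≤ M * ((z:ℝ)-(x:ℝ)) := by linarith [hLdef, h0, hd, hD]
    exact le_of_mul_le_mul_left h1 hMpos
  refine ⟨z, hzA, hzy, hzx, ?_⟩
  have hgap : gapOf A z = (z':ℝ) - (z:ℝ) := by rw [gapOf, ← hz'def]
  rw [hgap, div_le_iff₀ (by positivity : (0:ℝ) < 2*M^2)]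
  -- M*gap ≥ (z-x)/M - 2D ≥ (z-x)/(2M)
  have e1 : (z:ℝ)/M - (x:ℝ)/M - 2*D ≤ M * ((z':ℝ) - (z:ℝ)) := by linarith
  have e2 : ((z:ℝ) - (x:ℝ))/M = (z:ℝ)/M - (x:ℝ)/M := by ring
  have e3 : ((z:ℝ) - (x:ℝ)) ≤ M * ((z':ℝ) - (z:ℝ)) * M + 2*D*M := by
    have := mul_le_mul_of_nonneg_right e1 hMpos.le
    rw [sub_mul, sub_mul, div_mul_cancel₀ _ hMpos.ne', div_mul_cancel₀ _ hMpos.ne'] at this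
    linarith
  have e4 : M * ((z':ℝ) - (z:ℝ)) * M = ((z':ℝ) - (z:ℝ)) * M^2 := by ring
  linarith [e3, hzx4]
end

section
/- Let (G_i)_{i≥1} be i.i.d. random variables, each distributed as Geometric(1/2) conditioned to be at most M. Let m > 0 and integers a_1, ..., a_m with 0 < a_i < M, and nonnegative integers d_1, ..., d_{m−1} be given. Call a position l 'valid' if G_l ≥ a_1, G_{l+d_1+1} ≥ a_2, G_{l+d_1+1+d_2+1} ≥ a_3, ..., G_{l+m−1+Σ_{i=1}^{m−1} d_i} ≥ a_m. Let Z be the minimal valid position. Then for any a > 0, writing s = Σ_{i=1}^m a_i, we have P(Z > ⌈a·2^s⌉) ≤ exp(−a/m²). -/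
/-!
Write `c j = j + d 0 + ⋯ + d (j - 1)`, so that position `l` is valid when `a j ≤ G (l + c j)` for
all `j < m`, and its comb is the translate `l +ᵥ C` of `C = {c j}`. A maximal set `S ⊆ [1, N]` of
positions with pairwise disjoint combs has `N ≤ |S| m²`, since every position has its comb meeting
the comb of some `l ∈ S`, and for each `l` at most `m²` positions do. The combs of `S` read disjoint
sets of the independent `G i`, and each is valid with probability at least `2^{-s}` because
`P(G ≥ b) ≥ 2^{-b}`; hence no position of `S` is valid with probability at most
`(1 - 2^{-s})^|S| ≤ exp(-|S| 2^{-s}) ≤ exp(-a/m²)`.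

The `G i` are not assumed measurable, so independence is only applied to the atoms
`{∀ q, G (g q) = v q}`, and every other event is bounded by a sum of atom probabilities.
-/

open MeasureTheory ProbabilityTheory
open scoped ENNReal

open Finset Pointwise in
theorem exists_subset_pairwiseDisjoint_vadd (T C : Finset ℕ) (hC : C.Nonempty) :
    ∃ S ⊆ T, (S : Set ℕ).PairwiseDisjoint (· +ᵥ C) ∧ #T ≤ #S * #C ^ 2 := by
  classical
  obtain ⟨S, hS, hmax⟩ := (T.powerset.filter fun S : Finset ℕ =>
    (S : Set ℕ).PairwiseDisjoint (· +ᵥ C)).exists_max_image card ⟨∅, by simp⟩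
  rw [mem_filter, mem_powerset] at hS
  refine ⟨S, hS.1, hS.2, ?_⟩
  have hmeet : ∀ x ∈ T, ∃ l ∈ S, ¬ Disjoint (x +ᵥ C) (l +ᵥ C) := by
    intro x hx
    by_cases hxS : x ∈ S
    · exact ⟨x, hxS, by simpa using hC.ne_empty⟩
    by_contra! hdisj
    have hins := hmax (insert x S) <| mem_filter.2 ⟨mem_powerset.2 (insert_subset hx hS.1), by
      rw [coe_insert]
      exact hS.2.insert fun l hl _ => hdisj l hl⟩
    rw [card_insert_of_notMem hxS] at hins
    omega
  have hcover : T ⊆ S.biUnion fun l => (C ×ˢ C).image fun q => l + q.2 - q.1 := by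
    intro x hx
    obtain ⟨l, hl, hxl⟩ := hmeet x hx
    obtain ⟨y, hyx, hyl⟩ := not_disjoint_iff.1 hxl
    obtain ⟨c, hc, rfl⟩ := mem_vadd_finset.1 hyx
    obtain ⟨c', hc', hlc'⟩ := mem_vadd_finset.1 hyl
    refine mem_biUnion.2 ⟨l, hl, mem_image.2 ⟨(c, c'), mem_product.2 ⟨hc, hc'⟩, ?_⟩⟩
    simp only [vadd_eq_add] at hlc'
    omega
  calc #T ≤ #(S.biUnion fun l => (C ×ˢ C).image fun q => l + q.2 - q.1) := card_le_card hcover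
    _ ≤ ∑ l ∈ S, #((C ×ˢ C).image fun q => l + q.2 - q.1) := card_biUnion_le
    _ ≤ ∑ _l ∈ S, #C ^ 2 := sum_le_sum fun _ _ => card_image_le.trans (by rw [card_product, sq])
    _ = #S * #C ^ 2 := by rw [sum_const, smul_eq_mul]

open Finset Pointwise in
theorem injective_add_of_pairwiseDisjoint_vadd {S C : Finset ℕ}
    (hS : (S : Set ℕ).PairwiseDisjoint (· +ᵥ C)) {β : Type*} {c : β → ℕ}
    (hc : Function.Injective c) (hcC : ∀ j, c j ∈ C) :
    Function.Injective fun q : S × β => (q.1 : ℕ) + c q.2 := by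
  rintro ⟨l, j⟩ ⟨l', j'⟩ h
  have hll' : l = l' := by
    by_contra hne
    exact Finset.disjoint_left.1 (hS l.2 l'.2 (Subtype.coe_ne_coe.2 hne))
      (mem_vadd_finset.2 ⟨c j, hcC j, rfl⟩) (mem_vadd_finset.2 ⟨c j', hcC j', h.symm⟩)
  subst hll'
  simpa [hc.eq_iff] using h

open Finset in
theorem exists_subset_injective_add {β : Type*} [Fintype β] [Nonempty β] {c : β → ℕ}
    (hc : Function.Injective c) (T : Finset ℕ) :
    ∃ S ⊆ T, Function.Injective (fun q : S × β => (q.1 : ℕ) + c q.2) ∧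
      #T ≤ #S * Fintype.card β ^ 2 := by
  classical
  obtain ⟨S, hST, hS, hcard⟩ := exists_subset_pairwiseDisjoint_vadd T (univ.image c)
    (univ_nonempty.image c)
  refine ⟨S, hST, injective_add_of_pairwiseDisjoint_vadd hS hc fun j =>
    mem_image_of_mem c (mem_univ j), ?_⟩
  rwa [card_image_of_injective _ hc, card_univ] at hcard

section Independence

variable {Ω ι : Type*} [MeasurableSpace Ω] {μ : Measure Ω} {p : ℕ → ℝ≥0∞}

theorem measure_setOf_notMem_eq_zero {X : Ω → ℕ} (hX : ∀ k, μ {ω | X ω = k} = p k)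
    {V : Finset ℕ} (hV : ∀ k ∉ V, p k = 0) : μ {ω | X ω ∉ V} = 0 := by
  have hsub : {ω | X ω ∉ V} ⊆ ⋃ k ∈ (V : Set ℕ)ᶜ, {ω | X ω = k} := fun ω hω =>
    Set.mem_biUnion (x := X ω) hω rfl
  refine measure_mono_null hsub <| (measure_biUnion_null_iff (Set.to_countable _)).2 ?_
  exact fun k hk => (hX k).trans (hV k hk)

variable {G : ι → Ω → ℕ}

theorem ProbabilityTheory.iIndepFun.measure_setOf_forall_eq (hind : iIndepFun G μ)
    (hp : ∀ i k, μ {ω | G i ω = k} = p k) {α : Type*} [Fintype α] {g : α → ι}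
    (hg : Function.Injective g) (v : α → ℕ) :
    μ {ω | ∀ x, G (g x) ω = v x} = ∏ x, p (v x) := by
  have hset : {ω | ∀ x, G (g x) ω = v x} = ⋂ x, G (g x) ⁻¹' {v x} := by ext; simp
  rw [hset, (hind.precomp hg).meas_iInter fun x => ⟨{v x}, measurableSet_singleton _, rfl⟩]
  exact Finset.prod_congr rfl fun x _ => hp (g x) (v x)

open Finset in
theorem ProbabilityTheory.iIndepFun.measure_setOf_forall_mem_le (hind : iIndepFun G μ)
    (hp : ∀ i k, μ {ω | G i ω = k} = p k) {V : Finset ℕ} (hV : ∀ k ∉ V, p k = 0)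
    {κ β : Type*} [Fintype κ] [Fintype β] [DecidableEq β] {g : κ → β → ι}
    (hg : Function.Injective (Function.uncurry g)) (W : κ → Set (β → ℕ))
    [∀ l, DecidablePred (· ∈ W l)] :
    μ {ω | ∀ l, (fun j => G (g l j) ω) ∈ W l}
      ≤ ∏ l, ∑ w ∈ (Fintype.piFinset fun _ => V) with w ∈ W l, ∏ j, p (w j) := by
  classical
  set P : κ → Finset (β → ℕ) := fun l => (Fintype.piFinset fun _ => V).filter (· ∈ W l)
  set atom : (κ → β → ℕ) → Set Ω := fun v => {ω | ∀ q : κ × β, G (g q.1 q.2) ω = v q.1 q.2}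
  have hsub : {ω | ∀ l, (fun j => G (g l j) ω) ∈ W l}
      ⊆ (⋃ v ∈ Fintype.piFinset P, atom v) ∪ ⋃ q : κ × β, {ω | G (g q.1 q.2) ω ∉ V} := by
    intro ω hω
    by_cases hωV : ∀ q : κ × β, G (g q.1 q.2) ω ∈ V
    · refine Or.inl <| Set.mem_biUnion (x := fun l j => G (g l j) ω) (mem_coe.2 ?_) fun _ => rfl
      exact Fintype.mem_piFinset.2 fun l =>
        mem_filter.2 ⟨Fintype.mem_piFinset.2 fun j => hωV (l, j), hω l⟩
    · push Not at hωV
      exact Or.inr (Set.mem_iUnion.2 hωV)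
  calc μ {ω | ∀ l, (fun j => G (g l j) ω) ∈ W l}
      ≤ μ (⋃ v ∈ Fintype.piFinset P, atom v) + μ (⋃ q : κ × β, {ω | G (g q.1 q.2) ω ∉ V}) :=
        (measure_mono hsub).trans (measure_union_le _ _)
    _ = μ (⋃ v ∈ Fintype.piFinset P, atom v) := by
        rw [measure_iUnion_null fun q => measure_setOf_notMem_eq_zero (hp _) hV, add_zero]
    _ ≤ ∑ v ∈ Fintype.piFinset P, μ (atom v) := measure_biUnion_finset_le _ _
    _ = ∑ v ∈ Fintype.piFinset P, ∏ l, ∏ j, p (v l j) := sum_congr rfl fun v _ =>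
        (hind.measure_setOf_forall_eq hp hg (Function.uncurry v)).trans (Fintype.prod_prod_type _)
    _ = ∏ l, ∑ w ∈ P l, ∏ j, p (w j) := (prod_univ_sum P fun _ w => ∏ j, p (w j)).symm

end Independence

open Finset in
theorem sum_filter_not_forall_add_prod_sum {R α β : Type*} [CommSemiring R] [Fintype β]
    [DecidableEq β] (V : Finset α) (P : β → α → Prop) [∀ j, DecidablePred (P j)]
    [DecidablePred fun w : β → α => ∀ j, P j (w j)] (p : α → R) :
    ∑ w ∈ (Fintype.piFinset fun _ : β => V).filter (fun w : β → α => ¬ ∀ j, P j (w j)),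
        ∏ j, p (w j)
      + ∏ j, ∑ k ∈ V with P j k, p k = (∑ k ∈ V, p k) ^ Fintype.card β := by
  have hgood : (Fintype.piFinset fun _ : β => V).filter (fun w : β → α => ∀ j, P j (w j))
      = Fintype.piFinset fun j => V.filter (P j) := by
    ext w
    simp [forall_and]
  rw [prod_univ_sum, ← hgood, add_comm, sum_filter_add_sum_filter_not, sum_prod_piFinset,
    prod_const, card_univ]

noncomputable def truncGeomMass (M k : ℕ) : ℝ≥0∞ :=
  if 1 ≤ k ∧ k ≤ M then ENNReal.ofReal (((2 : ℝ) ^ k)⁻¹ / (1 - ((2 : ℝ) ^ M)⁻¹)) else 0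

section TruncGeom

open Finset

variable {b M : ℕ}

theorem sum_Icc_inv_two_pow (hbM : b ≤ M) :
    ∑ k ∈ Icc b M, ((2 : ℝ) ^ k)⁻¹ = 2 * ((2 : ℝ) ^ b)⁻¹ - ((2 : ℝ) ^ M)⁻¹ := by
  rw [← Finset.Ico_add_one_right_eq_Icc]
  simp_rw [← inv_pow]
  rw [geom_sum_Ico (by norm_num) (by omega), pow_succ]
  field_simp
  ring

theorem sum_Icc_truncGeomMass (hb : 1 ≤ b) (hbM : b ≤ M) :
    ∑ k ∈ Icc b M, truncGeomMass M k
      = ENNReal.ofReal ((2 * ((2 : ℝ) ^ b)⁻¹ - ((2 : ℝ) ^ M)⁻¹) / (1 - ((2 : ℝ) ^ M)⁻¹)) := by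
  have hmass : ∀ k ∈ Icc b M,
      truncGeomMass M k = ENNReal.ofReal (((2 : ℝ) ^ k)⁻¹ / (1 - ((2 : ℝ) ^ M)⁻¹)) := by
    intro k hk
    rw [mem_Icc] at hk
    exact if_pos ⟨hb.trans hk.1, hk.2⟩
  rw [sum_congr rfl hmass, ← ENNReal.ofReal_sum_of_nonneg fun k _ => by
    have : ((2 : ℝ) ^ M)⁻¹ ≤ 1 := inv_le_one_of_one_le₀ (one_le_pow₀ one_le_two)
    exact div_nonneg (by positivity) (by linarith), ← sum_div, sum_Icc_inv_two_pow hbM]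

theorem one_sub_inv_two_pow_pos (hM : 1 ≤ M) : 0 < 1 - ((2 : ℝ) ^ M)⁻¹ := by
  have : ((2 : ℝ) ^ M)⁻¹ < 1 := inv_lt_one_of_one_lt₀ (one_lt_pow₀ one_lt_two (by omega))
  linarith

theorem sum_truncGeomMass (hM : 1 ≤ M) : ∑ k ∈ Icc 1 M, truncGeomMass M k = 1 := by
  rw [sum_Icc_truncGeomMass le_rfl hM, ← ENNReal.ofReal_one]
  congr 1
  rw [div_eq_one_iff_eq (one_sub_inv_two_pow_pos hM).ne']
  norm_num

theorem ofReal_inv_two_pow_le_sum_Icc_truncGeomMass (hb : 1 ≤ b) (hbM : b ≤ M) :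
    ENNReal.ofReal ((2 : ℝ) ^ b)⁻¹ ≤ ∑ k ∈ Icc b M, truncGeomMass M k := by
  rw [sum_Icc_truncGeomMass hb hbM]
  refine ENNReal.ofReal_le_ofReal ?_
  rw [le_div_iff₀ (one_sub_inv_two_pow_pos (hb.trans hbM))]
  have : ((2 : ℝ) ^ M)⁻¹ ≤ ((2 : ℝ) ^ b)⁻¹ :=
    inv_anti₀ (by positivity) (pow_le_pow_right₀ one_le_two hbM)
  nlinarith [show (0 : ℝ) ≤ ((2 : ℝ) ^ M)⁻¹ by positivity]

theorem sum_filter_not_forall_le_truncGeomMass_le {β : Type*} [Fintype β] [DecidableEq β]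
    {a : β → ℕ} [DecidablePred fun w : β → ℕ => ∀ j, a j ≤ w j] (hM : 1 ≤ M)
    (ha : ∀ j, 1 ≤ a j ∧ a j ≤ M) :
    ∑ w ∈ (Fintype.piFinset fun _ : β => Icc 1 M).filter (fun w : β → ℕ => ¬ ∀ j, a j ≤ w j),
        ∏ j, truncGeomMass M (w j)
      ≤ ENNReal.ofReal (1 - ((2 : ℝ) ^ ∑ j, a j)⁻¹) := by
  set Q := ∏ j, ∑ k ∈ Icc 1 M with a j ≤ k, truncGeomMass M k
  have hsplit := sum_filter_not_forall_add_prod_sum (Icc 1 M) (fun j k => a j ≤ k)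
    (truncGeomMass M)
  rw [sum_truncGeomMass hM, one_pow] at hsplit
  have hQ : ENNReal.ofReal ((2 : ℝ) ^ ∑ j, a j)⁻¹ ≤ Q := by
    rw [← prod_pow_eq_pow_sum, ← prod_inv_distrib,
      ENNReal.ofReal_prod_of_nonneg fun j _ => by positivity]
    refine prod_le_prod' fun j _ => ?_
    have hfilter : (Icc 1 M).filter (a j ≤ ·) = Icc (a j) M := by
      ext k
      simp only [mem_filter, mem_Icc]
      have := ha j
      omega
    rw [hfilter]
    exact ofReal_inv_two_pow_le_sum_Icc_truncGeomMass (ha j).1 (ha j).2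
  calc _ = 1 - Q := ENNReal.eq_sub_of_add_eq (ne_top_of_le_ne_top ENNReal.one_ne_top
          (hsplit ▸ le_add_self)) hsplit
    _ ≤ 1 - ENNReal.ofReal ((2 : ℝ) ^ ∑ j, a j)⁻¹ := tsub_le_tsub_left hQ 1
    _ = ENNReal.ofReal (1 - ((2 : ℝ) ^ ∑ j, a j)⁻¹) := by
        rw [ENNReal.ofReal_sub 1 (by positivity), ENNReal.ofReal_one]

end TruncGeom

theorem one_sub_inv_pow_le_exp_neg_div {q t r : ℝ} {n : ℕ} (hq : 1 ≤ q) (hr : 0 < r)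
    (h : t * q ≤ n * r) : (1 - q⁻¹) ^ n ≤ Real.exp (-t / r) := by
  have hq0 : 0 < q := one_pos.trans_le hq
  calc (1 - q⁻¹) ^ n ≤ Real.exp (-q⁻¹) ^ n :=
        pow_le_pow_left₀ (by linarith [inv_le_one_of_one_le₀ hq]) (Real.one_sub_le_exp_neg _) n
    _ = Real.exp (-(n / q)) := by rw [← Real.exp_nat_mul]; ring_nf
    _ ≤ Real.exp (-t / r) := by
        rw [Real.exp_le_exp, neg_div, neg_le_neg_iff, div_le_div_iff₀ hr hq0]
        exact h

open Finset in
theorem waiting_time_for_valid_position_general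
    {Ω : Type} [MeasureSpace Ω] [IsProbabilityMeasure (ℙ : Measure Ω)]
    (M m : ℕ) (hm : 0 < m) (G : ℕ → Ω → ℕ)
    (hind : iIndepFun G ℙ)
    (hdist : ∀ i k : ℕ, ℙ {ω | G i ω = k}
      = if 1 ≤ k ∧ k ≤ M then
          ENNReal.ofReal (((2 : ℝ) ^ k)⁻¹ / (1 - ((2 : ℝ) ^ M)⁻¹)) else 0)
    (a : ℕ → ℕ) (ha : ∀ j < m, 0 < a j ∧ a j < M)
    (d : ℕ → ℕ) (aa : ℝ) :
    ℙ {ω | ∀ l : ℕ, 1 ≤ l →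
        l ≤ Nat.ceil (aa * (2 : ℝ) ^ (∑ j ∈ Finset.range m, a j)) →
        ¬ (∀ j < m, a j ≤ G (l + j + ∑ i ∈ Finset.range j, d i) ω)}
      ≤ ENNReal.ofReal (Real.exp (-aa / (m : ℝ) ^ 2)) := by
  set N := Nat.ceil (aa * (2 : ℝ) ^ (∑ j ∈ Finset.range m, a j))
  set c : Fin m → ℕ := fun j => j + ∑ i ∈ range j, d i
  have hc : Function.Injective c := StrictMono.injective fun j j' hjj' =>
    add_lt_add_of_lt_of_le hjj' (sum_le_sum_of_subset (range_subset_range.2 hjj'.le))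
  have : Nonempty (Fin m) := ⟨⟨0, hm⟩⟩
  obtain ⟨S, hSN, hinj, hcard⟩ := exists_subset_injective_add hc (Icc 1 N)
  rw [Nat.card_Icc, add_tsub_cancel_right, Fintype.card_fin] at hcard
  calc ℙ {ω | ∀ l : ℕ, 1 ≤ l → l ≤ N →
        ¬ (∀ j < m, a j ≤ G (l + j + ∑ i ∈ Finset.range j, d i) ω)}
      ≤ ℙ {ω | ∀ l : S, (fun j => G (l + c j) ω) ∈ {w : Fin m → ℕ | ¬ ∀ j : Fin m, a j ≤ w j}} := by
        refine measure_mono fun ω hω l hvalid => ?_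
        obtain ⟨hl1, hlN⟩ := mem_Icc.1 (hSN l.2)
        exact hω l hl1 hlN fun j hj => by simpa [c, add_assoc] using hvalid ⟨j, hj⟩
    _ ≤ ∏ _l : S, ∑ w ∈ (Fintype.piFinset fun _ => Icc 1 M) with ¬ ∀ j : Fin m, a j ≤ w j,
          ∏ j, truncGeomMass M (w j) :=
        hind.measure_setOf_forall_mem_le hdist (fun k hk => if_neg (by simpa using hk)) hinj _
    _ ≤ ∏ _l : S, ENNReal.ofReal (1 - ((2 : ℝ) ^ ∑ j ∈ range m, a j)⁻¹) := by
        rw [← Fin.sum_univ_eq_sum_range]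
        exact prod_le_prod' fun _ _ => sum_filter_not_forall_le_truncGeomMass_le
          ((ha 0 hm).1.trans (ha 0 hm).2) fun j => ⟨(ha j j.2).1, (ha j j.2).2.le⟩
    _ = ENNReal.ofReal ((1 - ((2 : ℝ) ^ ∑ j ∈ range m, a j)⁻¹) ^ #S) := by
        rw [prod_const, card_univ, Fintype.card_coe,
          ENNReal.ofReal_pow (sub_nonneg.2 (inv_le_one_of_one_le₀ (one_le_pow₀ one_le_two)))]
    _ ≤ ENNReal.ofReal (Real.exp (-aa / (m : ℝ) ^ 2)) :=
        ENNReal.ofReal_le_ofReal <| one_sub_inv_pow_le_exp_neg_div (one_le_pow₀ one_le_two)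
          (by positivity) ((Nat.le_ceil _).trans ((Nat.cast_le.2 hcard).trans_eq (by norm_cast)))

/-- waiting time for a valid comb position among i.i.d.
`Geom_{≤M}(1/2)` gaps. The probability that no position `1 ≤ l ≤ ⌈a·2^s⌉` is valid
is at most `exp(-a/m²)`, where `s = Σ aᵢ`. -/
theorem waiting_time_for_valid_position
    {Ω : Type} [MeasureSpace Ω] [IsProbabilityMeasure (ℙ : Measure Ω)]
    (M m : ℕ) (hm : 0 < m) (G : ℕ → Ω → ℕ)
    (hind : iIndepFun G ℙ)
    (hdist : ∀ i k : ℕ, ℙ {ω | G i ω = k}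
      = if 1 ≤ k ∧ k ≤ M then
          ENNReal.ofReal (((2 : ℝ) ^ k)⁻¹ / (1 - ((2 : ℝ) ^ M)⁻¹)) else 0)
    (a : ℕ → ℕ) (ha : ∀ j < m, 0 < a j ∧ a j < M)
    (d : ℕ → ℕ) (aa : ℝ) (haa : 0 < aa) :
    ℙ {ω | ∀ l : ℕ, 1 ≤ l →
        l ≤ Nat.ceil (aa * (2 : ℝ) ^ (∑ j ∈ Finset.range m, a j)) →
        ¬ (∀ j < m, a j ≤ G (l + j + ∑ i ∈ Finset.range j, d i) ω)}
      ≤ ENNReal.ofReal (Real.exp (-aa / (m : ℝ) ^ 2)) :=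
  waiting_time_for_valid_position_general M m hm G hind hdist a ha d aa
end

section
/- Let L be the set of all rooted increasing rough isometries with fixed constants (M, D, R) between two fixed finite subsets A, B ⊆ ℕ ∪ {0} both containing 0, partially ordered by T₁ ⪯ T₂ iff T₁(x) ≤ T₂(x) for all x ∈ A. If L is nonempty, then L is a distributive lattice: any T₁, T₂ ∈ L have join T₁ ∨ T₂ (pointwise max) and meet T₁ ∧ T₂ (pointwise min) both lying in L, and the distributive law T₁ ∧ (T₂ ∨ T₃) = (T₁ ∧ T₂) ∨ (T₁ ∧ T₃) holds. -/
lemma maxSub_bounds {a b c d : ℝ} :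
    min (b - a) (d - c) ≤ max b d - max a c ∧ max b d - max a c ≤ max (b - a) (d - c) := by
  constructor
  · rcases max_cases a c with ⟨h, _⟩ | ⟨h, _⟩ <;> rw [h]
    · exact le_trans (min_le_left _ _) (by linarith [le_max_left b d])
    · exact le_trans (min_le_right _ _) (by linarith [le_max_right b d])
  · rcases max_cases b d with ⟨h, _⟩ | ⟨h, _⟩ <;> rw [h]
    · exact le_trans (by linarith [le_max_left a c]) (le_max_left _ _)
    · exact le_trans (by linarith [le_max_right a c]) (le_max_right _ _)

lemma minSub_bounds {a b c d : ℝ} :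
    min (b - a) (d - c) ≤ min b d - min a c ∧ min b d - min a c ≤ max (b - a) (d - c) := by
  constructor
  · rcases min_cases b d with ⟨h, _⟩ | ⟨h, _⟩ <;> rw [h]
    · exact le_trans (min_le_left _ _) (by linarith [min_le_left a c])
    · exact le_trans (min_le_right _ _) (by linarith [min_le_right a c])
  · rcases min_cases a c with ⟨h, _⟩ | ⟨h, _⟩ <;> rw [h]
    · exact le_trans (by linarith [min_le_left b d]) (le_max_left _ _)
    · exact le_trans (by linarith [min_le_right b d]) (le_max_right _ _)

/-- the set of rooted increasing rough isometries between two finite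
rooted subsets of ℕ with fixed constants, if nonempty, is closed under pointwise max
(join) and pointwise min (meet), and the distributive law holds; hence it is a
distributive lattice. -/
theorem rootedIncRI_distributive_lattice (A B : Set ℕ) (hA : A.Finite) (hB : B.Finite)
    (h0A : 0 ∈ A) (h0B : 0 ∈ B) (M D R : ℝ)
    (hne : ∃ T, RootedIncRI A B T M D R) :
    (∀ T₁ T₂ : ℕ → ℕ, RootedIncRI A B T₁ M D R → RootedIncRI A B T₂ M D R →
        RootedIncRI A B (fun x => max (T₁ x) (T₂ x)) M D R ∧
        RootedIncRI A B (fun x => min (T₁ x) (T₂ x)) M D R) ∧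
    (∀ T₁ T₂ T₃ : ℕ → ℕ,
        (fun x => min (T₁ x) (max (T₂ x) (T₃ x))) =
        (fun x => max (min (T₁ x) (T₂ x)) (min (T₁ x) (T₃ x)))) := by
  refine ⟨fun T₁ T₂ h₁ h₂ => ?_, fun T₁ T₂ T₃ => funext fun x => min_max_distrib_left _ _ _⟩
  obtain ⟨r₁, m₁, mono₁, ri₁, surj₁⟩ := h₁
  obtain ⟨r₂, m₂, mono₂, ri₂, surj₂⟩ := h₂
  have key : ∀ x ∈ A, ∀ y ∈ A, x ≤ y →
      ((1 / M) * |(x : ℝ) - (y : ℝ)| - D ≤ (T₁ y : ℝ) - (T₁ x : ℝ) ∧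
        (T₁ y : ℝ) - (T₁ x : ℝ) ≤ M * |(x : ℝ) - (y : ℝ)| + D) ∧
      ((1 / M) * |(x : ℝ) - (y : ℝ)| - D ≤ (T₂ y : ℝ) - (T₂ x : ℝ) ∧
        (T₂ y : ℝ) - (T₂ x : ℝ) ≤ M * |(x : ℝ) - (y : ℝ)| + D) := by
    intro x hx y hy hxy
    have e₁ : |(T₁ x : ℝ) - (T₁ y : ℝ)| = (T₁ y : ℝ) - (T₁ x : ℝ) := by
      rw [abs_sub_comm]
      exact abs_of_nonneg (sub_nonneg.2 (Nat.cast_le.2 (mono₁ x hx y hy hxy)))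
    have e₂ : |(T₂ x : ℝ) - (T₂ y : ℝ)| = (T₂ y : ℝ) - (T₂ x : ℝ) := by
      rw [abs_sub_comm]
      exact abs_of_nonneg (sub_nonneg.2 (Nat.cast_le.2 (mono₂ x hx y hy hxy)))
    have b₁ := ri₁ x hx y hy
    have b₂ := ri₂ x hx y hy
    rw [e₁] at b₁; rw [e₂] at b₂
    exact ⟨b₁, b₂⟩
  constructor
  · refine ⟨by simp [r₁, r₂], fun x hx => ?_, fun x hx y hy hxy => max_le_max
      (mono₁ x hx y hy hxy) (mono₂ x hx y hy hxy), ?_, fun b hb => ?_⟩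
    · show max (T₁ x) (T₂ x) ∈ B
      rcases max_cases (T₁ x) (T₂ x) with ⟨h, _⟩ | ⟨h, _⟩ <;> rw [h]
      exacts [m₁ x hx, m₂ x hx]
    · -- metric bounds for max
      have main : ∀ x ∈ A, ∀ y ∈ A, x ≤ y →
          (1 / M) * |(x : ℝ) - (y : ℝ)| - D ≤ |(max (T₁ x) (T₂ x) : ℝ) - (max (T₁ y) (T₂ y) : ℝ)| ∧
          |(max (T₁ x) (T₂ x) : ℝ) - (max (T₁ y) (T₂ y) : ℝ)| ≤ M * |(x : ℝ) - (y : ℝ)| + D := by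
        intro x hx y hy hxy
        obtain ⟨⟨l₁, u₁⟩, l₂, u₂⟩ := key x hx y hy hxy
        have e : |(max (T₁ x) (T₂ x) : ℝ) - (max (T₁ y) (T₂ y) : ℝ)| =
            max (T₁ y : ℝ) (T₂ y : ℝ) - max (T₁ x : ℝ) (T₂ x : ℝ) := by
          push_cast
          rw [abs_sub_comm]
          exact abs_of_nonneg (sub_nonneg.2 (max_le_max (Nat.cast_le.2 (mono₁ x hx y hy hxy))
            (Nat.cast_le.2 (mono₂ x hx y hy hxy))))
        rw [e]
        obtain ⟨hlo, hhi⟩ := @maxSub_bounds (T₁ x : ℝ) (T₁ y : ℝ) (T₂ x : ℝ) (T₂ y : ℝ)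
        have h1 := le_min l₁ l₂
        have h2 := max_le u₁ u₂
        exact ⟨le_trans h1 hlo, le_trans hhi h2⟩
      intro x hx y hy
      simp only [Nat.cast_max, Nat.cast_min]
      rcases le_total x y with h | h
      · exact main x hx y hy h
      · rw [abs_sub_comm ((max (T₁ x) (T₂ x) : ℝ)), abs_sub_comm ((x : ℝ))]
        exact main y hy x hx h
    · -- near-surjectivity for max
      obtain ⟨x₁, hx₁, h₁⟩ := surj₁ b hb
      obtain ⟨x₂, hx₂, h₂⟩ := surj₂ b hb
      rw [abs_le] at h₁ h₂
      simp only [Nat.cast_max, Nat.cast_min]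
      rcases le_total x₁ x₂ with h | h
      · refine ⟨x₁, hx₁, ?_⟩
        rw [abs_le]
        have hm : (T₂ x₁ : ℝ) ≤ (T₂ x₂ : ℝ) := Nat.cast_le.2 (mono₂ x₁ hx₁ x₂ hx₂ h)
        constructor
        · have := le_max_left (T₁ x₁ : ℝ) (T₂ x₁ : ℝ); linarith [h₁.1]
        · have := max_le (show (T₁ x₁ : ℝ) ≤ b + R by linarith [h₁.2])
            (show (T₂ x₁ : ℝ) ≤ b + R by linarith [h₂.2])
          linarith
      · refine ⟨x₂, hx₂, ?_⟩
        rw [abs_le]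
        have hm : (T₁ x₂ : ℝ) ≤ (T₁ x₁ : ℝ) := Nat.cast_le.2 (mono₁ x₂ hx₂ x₁ hx₁ h)
        constructor
        · have := le_max_right (T₁ x₂ : ℝ) (T₂ x₂ : ℝ); linarith [h₂.1]
        · have := max_le (show (T₁ x₂ : ℝ) ≤ b + R by linarith [h₁.2])
            (show (T₂ x₂ : ℝ) ≤ b + R by linarith [h₂.2])
          linarith
  · refine ⟨by simp [r₁, r₂], fun x hx => ?_, fun x hx y hy hxy => min_le_min
      (mono₁ x hx y hy hxy) (mono₂ x hx y hy hxy), ?_, fun b hb => ?_⟩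
    · show min (T₁ x) (T₂ x) ∈ B
      rcases min_cases (T₁ x) (T₂ x) with ⟨h, _⟩ | ⟨h, _⟩ <;> rw [h]
      exacts [m₁ x hx, m₂ x hx]
    · -- metric bounds for min
      have main : ∀ x ∈ A, ∀ y ∈ A, x ≤ y →
          (1 / M) * |(x : ℝ) - (y : ℝ)| - D ≤ |(min (T₁ x) (T₂ x) : ℝ) - (min (T₁ y) (T₂ y) : ℝ)| ∧
          |(min (T₁ x) (T₂ x) : ℝ) - (min (T₁ y) (T₂ y) : ℝ)| ≤ M * |(x : ℝ) - (y : ℝ)| + D := by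
        intro x hx y hy hxy
        obtain ⟨⟨l₁, u₁⟩, l₂, u₂⟩ := key x hx y hy hxy
        have e : |(min (T₁ x) (T₂ x) : ℝ) - (min (T₁ y) (T₂ y) : ℝ)| =
            min (T₁ y : ℝ) (T₂ y : ℝ) - min (T₁ x : ℝ) (T₂ x : ℝ) := by
          push_cast
          rw [abs_sub_comm]
          exact abs_of_nonneg (sub_nonneg.2 (min_le_min (Nat.cast_le.2 (mono₁ x hx y hy hxy))
            (Nat.cast_le.2 (mono₂ x hx y hy hxy))))
        rw [e]
        obtain ⟨hlo, hhi⟩ := @minSub_bounds (T₁ x : ℝ) (T₁ y : ℝ) (T₂ x : ℝ) (T₂ y : ℝ)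
        have h1 := le_min l₁ l₂
        have h2 := max_le u₁ u₂
        exact ⟨le_trans h1 hlo, le_trans hhi h2⟩
      intro x hx y hy
      simp only [Nat.cast_max, Nat.cast_min]
      rcases le_total x y with h | h
      · exact main x hx y hy h
      · rw [abs_sub_comm ((min (T₁ x) (T₂ x) : ℝ)), abs_sub_comm ((x : ℝ))]
        exact main y hy x hx h
    · -- near-surjectivity for min
      obtain ⟨x₁, hx₁, h₁⟩ := surj₁ b hb
      obtain ⟨x₂, hx₂, h₂⟩ := surj₂ b hb
      rw [abs_le] at h₁ h₂
      simp only [Nat.cast_max, Nat.cast_min]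
      rcases le_total x₁ x₂ with h | h
      · refine ⟨x₂, hx₂, ?_⟩
        rw [abs_le]
        have hm : (T₁ x₁ : ℝ) ≤ (T₁ x₂ : ℝ) := Nat.cast_le.2 (mono₁ x₁ hx₁ x₂ hx₂ h)
        constructor
        · have := le_min (show b - R ≤ (T₁ x₂ : ℝ) by linarith [h₁.1])
            (show b - R ≤ (T₂ x₂ : ℝ) by linarith [h₂.1])
          linarith
        · have := min_le_right (T₁ x₂ : ℝ) (T₂ x₂ : ℝ); linarith [h₂.2]
      · refine ⟨x₁, hx₁, ?_⟩
        rw [abs_le]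
        have hm : (T₂ x₂ : ℝ) ≤ (T₂ x₁ : ℝ) := Nat.cast_le.2 (mono₂ x₂ hx₂ x₁ hx₁ h)
        constructor
        · have := le_min (show b - R ≤ (T₁ x₁ : ℝ) by linarith [h₁.1])
            (show b - R ≤ (T₂ x₁ : ℝ) by linarith [h₂.1])
          linarith
        · have := min_le_left (T₁ x₁ : ℝ) (T₂ x₁ : ℝ); linarith [h₁.2]
end
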